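/- arXiv:2605.26713 — 2 statements merged into one kernel-verified Lean document; each statement's English description precedes it below -/
import Mathlib

section
/- Let p be an L-Lipschitz probability density on ℝ, and fix a partition Γ = {a = γ_1 < γ_2 < ... < γ_{C+1} = b} of (a,b] with P(x ∉ (a,b]) = ε for some ε > 0. Let Δ_c = γ_{c+1} − γ_c and |Γ| = max_c Δ_c. Define the piecewise-constant density p̃(x) = Σ_{c=1}^C 1_{[γ_c, γ_{c+1})}(x) Δ_c⁻¹ ∫_{γ_c}^{γ_{c+1}} p(t)dt / (1−ε). Then the total variation distance satisfies TV(p, p̃) ≤ L|Γ|(b−a)/2 + ε. -/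
/-!
Outside `[a, b)` the histogram vanishes, so that region contributes exactly its mass `ε` to
`∫ |p - p̃|`. On a bin of width `Δ` carrying mass `m`, Lipschitz continuity keeps `p` within `LΔ`
of the bin average `m / Δ`, which costs at most `LΔ² ≤ L|Γ|Δ`; replacing `m / Δ` by the
renormalised height `m / (Δ(1 - ε))` costs `m ε / (1 - ε)`, and these costs add up to `ε` because
the masses add up to `1 - ε`. Hence `∫ |p - p̃| ≤ L|Γ|(b - a) + 2ε`.
-/

open MeasureTheory Set

theorem Fin.sum_succ_sub_castSucc {G : Type*} [AddCommGroup G] :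
    ∀ {n : ℕ} (f : Fin (n + 1) → G), ∑ i : Fin n, (f i.succ - f i.castSucc) = f (Fin.last n) - f 0
  | 0, _ => by simp
  | n + 1, f => by
    simp only [Fin.sum_univ_castSucc, Fin.succ_castSucc, Fin.succ_last,
      Fin.sum_succ_sub_castSucc (fun i => f i.castSucc)]
    simp

theorem Monotone.sum_setIntegral_Ioc {E : Type*} [NormedAddCommGroup E] [NormedSpace ℝ E]
    {μ : Measure ℝ} {f : ℝ → E} :
    ∀ {n : ℕ} {γ : Fin (n + 1) → ℝ}, Monotone γ → IntegrableOn f (Ioc (γ 0) (γ (Fin.last n))) μ →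
      ∑ i : Fin n, ∫ x in Ioc (γ i.castSucc) (γ i.succ), f x ∂μ =
        ∫ x in Ioc (γ 0) (γ (Fin.last n)), f x ∂μ
  | 0, _, _, _ => by simp
  | n + 1, γ, hγ, hf => by
    have hmid : γ 0 ≤ γ (Fin.last n).castSucc ∧ γ (Fin.last n).castSucc ≤ γ (Fin.last (n + 1)) :=
      ⟨hγ (Fin.zero_le _), hγ (Fin.le_last _)⟩
    rw [← Ioc_union_Ioc_eq_Ioc hmid.1 hmid.2] at hf ⊢
    rw [Fin.sum_univ_castSucc,
      setIntegral_union (Ioc_disjoint_Ioc_of_le le_rfl) measurableSet_Ioc hf.left_of_union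
        hf.right_of_union, ← Fin.succ_last]
    congr 1
    exact Monotone.sum_setIntegral_Ioc (hγ.comp Fin.strictMono_castSucc.monotone) hf.left_of_union

noncomputable def piecewiseConst {α β : Type*} [Preorder α] [AddCommMonoid β] {n : ℕ}
    (γ : Fin (n + 1) → α) (v : Fin n → β) (x : α) : β :=
  ∑ i : Fin n, (Ico (γ i.castSucc) (γ i.succ)).indicator (fun _ => v i) x

section piecewiseConst

variable {α β : Type*} [LinearOrder α] [AddCommMonoid β] {n : ℕ} {γ : Fin (n + 1) → α}
  {v : Fin n → β} {x : α}

theorem piecewiseConst_of_mem (hγ : Monotone γ) {i : Fin n}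
    (hx : x ∈ Ico (γ i.castSucc) (γ i.succ)) : piecewiseConst γ v x = v i := by
  refine (Finset.sum_eq_single i (fun j _ hji => indicator_of_notMem (fun hj => ?_) _)
    (by simp)).trans (indicator_of_mem hx _)
  rcases hji.lt_or_gt with hij | hij
  · exact (hγ (Fin.succ_le_castSucc_iff.2 hij)).not_gt (hx.1.trans_lt hj.2)
  · exact (hγ (Fin.succ_le_castSucc_iff.2 hij)).not_gt (hj.1.trans_lt hx.2)

theorem piecewiseConst_of_notMem (hγ : Monotone γ) (hx : x ∉ Ico (γ 0) (γ (Fin.last n))) :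
    piecewiseConst γ v x = 0 :=
  Finset.sum_eq_zero fun _ _ => indicator_of_notMem
    (fun hi => hx (Ico_subset_Ico (hγ (Fin.zero_le _)) (hγ (Fin.le_last _)) hi)) _

end piecewiseConst

theorem integrable_piecewiseConst {E : Type*} [NormedAddCommGroup E] {μ : Measure ℝ}
    [IsLocallyFiniteMeasure μ] {n : ℕ} (γ : Fin (n + 1) → ℝ) (v : Fin n → E) :
    Integrable (piecewiseConst γ v) μ :=
  integrable_finsetSum _ fun _ _ =>
    (integrable_indicator_iff measurableSet_Ico).2 (integrableOn_const measure_Ico_lt_top.ne)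

namespace LipschitzOnWith

variable {f : ℝ → ℝ} {K : NNReal} {s t : ℝ}

theorem abs_sub_integral_Ioc_div_le (hf : LipschitzOnWith K f (Icc s t)) (hst : s < t) {x : ℝ}
    (hx : x ∈ Icc s t) : |f x - (∫ y in Ioc s t, f y) / (t - s)| ≤ K * (t - s) := by
  have hts : 0 < t - s := sub_pos.2 hst
  have hvol : volume.real (Ioc s t) = t - s := by simp [hst.le]
  have hfi : IntegrableOn f (Ioc s t) :=
    hf.continuousOn.integrableOn_Icc.mono_set Ioc_subset_Icc_self
  have hconst : IntegrableOn (fun _ => f x) (Ioc s t) := integrableOn_const measure_Ioc_lt_top.ne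
  have hdev : f x - (∫ y in Ioc s t, f y) / (t - s) = (∫ y in Ioc s t, (f x - f y)) / (t - s) := by
    rw [integral_sub hconst hfi, setIntegral_const, hvol, smul_eq_mul]
    field_simp
  have hbound : ‖∫ y in Ioc s t, (f x - f y)‖ ≤ K * (t - s) * volume.real (Ioc s t) :=
    norm_setIntegral_le_of_norm_le_const measure_Ioc_lt_top fun y hy =>
      (hf.dist_le_mul x hx y (Ioc_subset_Icc_self hy)).trans <| by
        gcongr
        exact Real.dist_le_of_mem_Icc hx (Ioc_subset_Icc_self hy)
  rw [hvol, Real.norm_eq_abs] at hbound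
  rwa [hdev, abs_div, abs_of_pos hts, div_le_iff₀ hts]

theorem integral_Ioc_abs_sub_le (hf : LipschitzOnWith K f (Icc s t)) (hst : s < t) {g : ℝ → ℝ}
    {v : ℝ} (hg : ∀ x ∈ Ioo s t, g x = v) :
    ∫ x in Ioc s t, |f x - g x| ≤ K * (t - s) ^ 2 + |(∫ x in Ioc s t, f x) - (t - s) * v| := by
  have hts : 0 < t - s := sub_pos.2 hst
  set m := ∫ x in Ioc s t, f x
  have hpt : ∀ x ∈ Ioo s t, |f x - g x| ≤ K * (t - s) + |m / (t - s) - v| := fun x hx => by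
    rw [hg x hx]
    exact (abs_sub_le _ _ _).trans
      (add_le_add_left (hf.abs_sub_integral_Ioc_div_le hst (Ioo_subset_Icc_self hx)) _)
  calc ∫ x in Ioc s t, |f x - g x|
      = ‖∫ x in Ioo s t, |f x - g x|‖ := by
        rw [integral_Ioc_eq_integral_Ioo,
          Real.norm_of_nonneg (integral_nonneg fun _ => abs_nonneg _)]
    _ ≤ (K * (t - s) + |m / (t - s) - v|) * volume.real (Ioo s t) :=
      norm_setIntegral_le_of_norm_le_const measure_Ioo_lt_top fun x hx => by
        simpa only [Real.norm_eq_abs, abs_abs] using hpt x hx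
    _ = K * (t - s) ^ 2 + |m - (t - s) * v| := by
      rw [Real.volume_real_Ioo_of_le hst.le, add_mul, ← abs_of_pos hts, ← abs_mul, abs_of_pos hts]
      congr 1
      · ring
      · congr 1
        field_simp

theorem integral_Ioc_abs_sub_piecewiseConst_le {n : ℕ} {γ : Fin (n + 1) → ℝ}
    (hf : LipschitzOnWith K f (Icc (γ 0) (γ (Fin.last n)))) (hγ : StrictMono γ) {h : ℝ}
    (hh : ∀ i : Fin n, γ i.succ - γ i.castSucc ≤ h) (v : Fin n → ℝ) :
    ∫ x in Ioc (γ 0) (γ (Fin.last n)), |f x - piecewiseConst γ v x| ≤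
      K * h * (γ (Fin.last n) - γ 0) +
        ∑ i, |(∫ x in Ioc (γ i.castSucc) (γ i.succ), f x) - (γ i.succ - γ i.castSucc) * v i| := by
  have hfi : IntegrableOn (fun x => |f x - piecewiseConst γ v x|) (Ioc (γ 0) (γ (Fin.last n))) :=
    ((hf.continuousOn.integrableOn_Icc.mono_set Ioc_subset_Icc_self).sub
      (integrable_piecewiseConst γ v).integrableOn).abs
  rw [← hγ.monotone.sum_setIntegral_Ioc hfi, ← Fin.sum_succ_sub_castSucc, Finset.mul_sum,
    ← Finset.sum_add_distrib]
  refine Finset.sum_le_sum fun i _ => ?_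
  have hbin := hf.mono (Icc_subset_Icc (hγ.monotone (Fin.zero_le i.castSucc))
    (hγ.monotone (Fin.le_last i.succ)))
  have hi : γ i.castSucc < γ i.succ := hγ Fin.castSucc_lt_succ
  refine (hbin.integral_Ioc_abs_sub_le hi
    fun x hx => piecewiseConst_of_mem (v := v) hγ.monotone (Ioo_subset_Ico_self hx)).trans ?_
  rw [sq, ← mul_assoc]
  gcongr
  exact hh i

end LipschitzOnWith

theorem Finset.sum_abs_sub_div_one_sub_le {ι : Type*} (s : Finset ι) {m : ι → ℝ} {ε : ℝ}
    (hm : ∀ i ∈ s, 0 ≤ m i) (hs : ∑ i ∈ s, m i = 1 - ε) (hε : 0 ≤ ε) :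
    ∑ i ∈ s, |m i - m i / (1 - ε)| ≤ ε := by
  have hterm : ∀ i ∈ s, |m i - m i / (1 - ε)| = m i * |1 - (1 - ε)⁻¹| := fun i hi => by
    rw [div_eq_mul_inv, ← mul_one_sub, abs_mul, abs_of_nonneg (hm i hi)]
  rw [Finset.sum_congr rfl hterm, ← Finset.sum_mul, hs]
  rcases eq_or_ne (1 - ε) 0 with h | h
  · rw [h, zero_mul]
    exact hε
  · nth_rw 1 [← abs_of_nonneg (hs ▸ Finset.sum_nonneg hm : 0 ≤ 1 - ε)]
    rw [← abs_mul, mul_one_sub, mul_inv_cancel₀ h, sub_sub_cancel_left, abs_neg, abs_of_nonneg hε]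

theorem tv_discretization_general {C : ℕ} [NeZero C] (p : ℝ → ℝ) (L : ℝ)
    (hp0 : ∀ x, 0 ≤ p x) (hpint : Integrable p) (hp1 : ∫ x, p x = 1)
    (hLip : ∀ x y, |p x - p y| ≤ L * |x - y|)
    (a b : ℝ)
    (γ : Fin (C + 1) → ℝ) (hmono : StrictMono γ)
    (hγ0 : γ 0 = a) (hγC : γ (Fin.last C) = b)
    (ε : ℝ)
    (hεdef : ∫ x in Set.Ioc a b, p x = 1 - ε)
    (pt : ℝ → ℝ)
    (hpt : ∀ x, pt x = ∑ c : Fin C,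
      Set.indicator (Set.Ico (γ c.castSucc) (γ c.succ))
        (fun _ => (∫ t in Set.Ioc (γ c.castSucc) (γ c.succ), p t) /
          ((γ c.succ - γ c.castSucc) * (1 - ε))) x) :
    (1 / 2) * ∫ x, |p x - pt x| ≤
      L * (Finset.univ.sup' Finset.univ_nonempty
        (fun c : Fin C => γ c.succ - γ c.castSucc)) * (b - a) / 2 + ε := by
  subst hγ0 hγC
  set Δ : Fin C → ℝ := fun c => γ c.succ - γ c.castSucc
  set m : Fin C → ℝ := fun c => ∫ t in Ioc (γ c.castSucc) (γ c.succ), p t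
  set v : Fin C → ℝ := fun c => m c / (Δ c * (1 - ε))
  obtain rfl : pt = piecewiseConst γ v := funext hpt
  have hL : 0 ≤ L := (abs_nonneg _).trans (by simpa using hLip 1 0)
  have hpLip : LipschitzWith L.toNNReal p := LipschitzWith.of_dist_le_mul fun x y => by
    simpa only [Real.coe_toNNReal _ hL, Real.dist_eq] using hLip x y
  have hout : ∫ x in (Ico (γ 0) (γ (Fin.last C)))ᶜ, |p x - piecewiseConst γ v x| = ε := by
    rw [setIntegral_congr_fun measurableSet_Ico.compl fun x hx => by
        rw [piecewiseConst_of_notMem hmono.monotone hx, sub_zero, abs_of_nonneg (hp0 x)],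
      setIntegral_compl measurableSet_Ico hpint, hp1, integral_Ico_eq_integral_Ioc, hεdef]
    ring
  have hε : 0 ≤ ε := hout ▸ setIntegral_nonneg measurableSet_Ico.compl fun _ _ => abs_nonneg _
  have hin := hpLip.lipschitzOnWith.integral_Ioc_abs_sub_piecewiseConst_le hmono
    (h := Finset.univ.sup' Finset.univ_nonempty Δ) (fun c => Finset.le_sup' Δ (Finset.mem_univ c)) v
  have hrenorm : ∑ c, |m c - Δ c * v c| ≤ ε := by
    have hv : ∀ c, Δ c * v c = m c / (1 - ε) := fun c => by
      have hΔ : Δ c ≠ 0 := (sub_pos.2 (hmono (Fin.castSucc_lt_succ (i := c)))).ne'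
      rw [mul_div_assoc', mul_div_mul_left _ _ hΔ]
    simp only [hv]
    exact Finset.sum_abs_sub_div_one_sub_le _
      (fun c _ => setIntegral_nonneg measurableSet_Ioc fun x _ => hp0 x)
      ((hmono.monotone.sum_setIntegral_Ioc hpint.integrableOn).trans hεdef) hε
  rw [← integral_add_compl (f := fun x => |p x - piecewiseConst γ v x|) measurableSet_Ico
    (hpint.sub (integrable_piecewiseConst γ v)).abs, integral_Ico_eq_integral_Ioc, hout]
  rw [Real.coe_toNNReal _ hL] at hin
  linarith [hin.trans (add_le_add le_rfl hrenorm)]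

/-- Discretization error of a Lipschitz density: binning on a partition of `(a,b]`
carrying mass `1 - ε` incurs total variation error at most `L|Γ|(b-a)/2 + ε`. -/
theorem tv_discretization {C : ℕ} [NeZero C] (p : ℝ → ℝ) (L : ℝ)
    (hp0 : ∀ x, 0 ≤ p x) (hpint : Integrable p) (hp1 : ∫ x, p x = 1)
    (hLip : ∀ x y, |p x - p y| ≤ L * |x - y|)
    (a b : ℝ) (hab : a < b)
    (γ : Fin (C + 1) → ℝ) (hmono : StrictMono γ)
    (hγ0 : γ 0 = a) (hγC : γ (Fin.last C) = b)
    (ε : ℝ) (hε : 0 < ε)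
    (hεdef : ∫ x in Set.Ioc a b, p x = 1 - ε)
    (pt : ℝ → ℝ)
    (hpt : ∀ x, pt x = ∑ c : Fin C,
      Set.indicator (Set.Ico (γ c.castSucc) (γ c.succ))
        (fun _ => (∫ t in Set.Ioc (γ c.castSucc) (γ c.succ), p t) /
          ((γ c.succ - γ c.castSucc) * (1 - ε))) x) :
    (1 / 2) * ∫ x, |p x - pt x| ≤
      L * (Finset.univ.sup' Finset.univ_nonempty
        (fun c : Fin C => γ c.succ - γ c.castSucc)) * (b - a) / 2 + ε :=
  tv_discretization_general p L hp0 hpint hp1 hLip a b γ hmono hγ0 hγC ε hεdef pt hpt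
end

section
/- Let G ∈ ℝ^{n×n} be symmetric PSD, σ² > 0, 0 < η < 1/(λ_1(G) + σ²), Y ∈ ℝ^n and k_x ∈ ℝ^n. Define the test-point error e^(L)(x) = −k_xᵀ(I − η(G + σ²I))^L (G + σ²I)⁻¹ Y. Then |e^(L)(x)| ≤ exp(−η(λ_n(G) + σ²)L) · ‖k_x‖₂ ‖Y‖₂ / (λ_n(G) + σ²). -/
/-!
Diagonalising `G = U diag(λ) Uᵀ`, the error is `-kxᵀ f(G) Y` with
`f(λ) = (1 - η(λ + σ²))^L / (λ + σ²)`. The step-size condition gives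
`0 ≤ 1 - η(λ + σ²) ≤ 1 - η(λ_n + σ²) ≤ exp(-η(λ_n + σ²))` on the spectrum, so
`|f| ≤ exp(-η(λ_n + σ²)L) / (λ_n + σ²)` there, and since `Uᵀ` is an isometry the bilinear form
of `f(G)` is bounded by this constant times `‖kx‖ ‖Y‖`.
-/

open Matrix

noncomputable def enorm' {n : ℕ} (v : Fin n → ℝ) : ℝ := Real.sqrt (∑ i, v i ^ 2)

section EuclideanBound

variable {n : ℕ}

lemma enorm'_star_mulVec_of_mem_unitary {U : Matrix (Fin n) (Fin n) ℝ} (hU : U ∈ unitary _)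
    (v : Fin n → ℝ) : enorm' (star U *ᵥ v) = enorm' v := by
  have hUt : star U = Uᵀ := conjTranspose_eq_transpose_of_trivial U
  have h : (star U *ᵥ v) ⬝ᵥ (star U *ᵥ v) = v ⬝ᵥ v := by
    conv_lhs => arg 1; rw [hUt, mulVec_transpose]
    rw [← dotProduct_mulVec, mulVec_mulVec, Unitary.mul_star_self_of_mem hU, one_mulVec]
  simpa only [enorm', dotProduct, ← sq] using congrArg Real.sqrt h

lemma abs_dotProduct_diagonal_mulVec_le {d : Fin n → ℝ} {C : ℝ} (hd : ∀ i, |d i| ≤ C)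
    (a b : Fin n → ℝ) : |a ⬝ᵥ diagonal d *ᵥ b| ≤ C * enorm' a * enorm' b := by
  rcases isEmpty_or_nonempty (Fin n) with hn | ⟨⟨i⟩⟩
  · simp [dotProduct, enorm']
  calc |a ⬝ᵥ diagonal d *ᵥ b| = |∑ i, d i * (a i * b i)| := by
        simp only [mulVec_diagonal, dotProduct]
        congr 1
        exact Finset.sum_congr rfl fun i _ => by ring
    _ ≤ ∑ i, |d i| * (|a i| * |b i|) := by
        simpa only [abs_mul] using Finset.abs_sum_le_sum_abs (fun i => d i * (a i * b i)) _
    _ ≤ ∑ i, C * (|a i| * |b i|) := by gcongr with i; exact hd i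
    _ = C * ∑ i, |a i| * |b i| := (Finset.mul_sum ..).symm
    _ ≤ C * (enorm' a * enorm' b) := by
        gcongr
        · exact (abs_nonneg _).trans (hd i)
        · simpa only [sq_abs, enorm'] using
            Real.sum_mul_le_sqrt_mul_sqrt Finset.univ (|a ·|) (|b ·|)
    _ = C * enorm' a * enorm' b := (mul_assoc ..).symm

lemma abs_dotProduct_conj_diagonal_mulVec_le {U : Matrix (Fin n) (Fin n) ℝ}
    (hU : U ∈ unitary _) {d : Fin n → ℝ} {C : ℝ} (hd : ∀ i, |d i| ≤ C) (x y : Fin n → ℝ) :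
    |x ⬝ᵥ (U * diagonal d * star U) *ᵥ y| ≤ C * enorm' x * enorm' y := by
  have hUt : star U = Uᵀ := conjTranspose_eq_transpose_of_trivial U
  have h : x ⬝ᵥ (U * diagonal d * star U) *ᵥ y =
      (star U *ᵥ x) ⬝ᵥ diagonal d *ᵥ (star U *ᵥ y) := by
    rw [← mulVec_mulVec, ← mulVec_mulVec, dotProduct_mulVec, hUt, mulVec_transpose,
      mulVec_transpose]
  rw [h, ← enorm'_star_mulVec_of_mem_unitary hU x, ← enorm'_star_mulVec_of_mem_unitary hU y]
  exact abs_dotProduct_diagonal_mulVec_le hd _ _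

lemma Matrix.IsHermitian.abs_dotProduct_cfc_mulVec_le {A : Matrix (Fin n) (Fin n) ℝ}
    (hA : A.IsHermitian) {f : ℝ → ℝ} {C : ℝ} (hf : ∀ i, |f (hA.eigenvalues i)| ≤ C)
    (x y : Fin n → ℝ) : |x ⬝ᵥ cfc f A *ᵥ y| ≤ C * enorm' x * enorm' y := by
  rw [hA.cfc_eq, IsHermitian.cfc, Unitary.conjStarAlgAut_apply]
  exact abs_dotProduct_conj_diagonal_mulVec_le hA.eigenvectorUnitary.2 hf x y

end EuclideanBound

lemma Matrix.IsHermitian.one_sub_smul_pow_mul_inv_eq_cfc {ι : Type*} [Fintype ι]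
    [DecidableEq ι] {G : Matrix ι ι ℝ} (hG : G.IsHermitian) {σ2 : ℝ}
    (hshift : ∀ x ∈ spectrum ℝ G, x + σ2 ≠ 0) (η : ℝ) (L : ℕ) :
    (1 - η • (G + σ2 • (1 : Matrix ι ι ℝ))) ^ L * (G + σ2 • (1 : Matrix ι ι ℝ))⁻¹ =
      cfc (fun x => (1 - η * (x + σ2)) ^ L * (x + σ2)⁻¹) G := by
  have hcont : ∀ g : ℝ → ℝ, ContinuousOn g (spectrum ℝ G) := fun g =>
    G.finite_real_spectrum.continuousOn g
  have hA : cfc (· + σ2) G = G + σ2 • 1 := by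
    rw [cfc_add_const σ2 (fun x => x) G (hcont _) hG.isSelfAdjoint,
      cfc_id' ℝ G hG.isSelfAdjoint, Algebra.algebraMap_eq_smul_one]
  have hstep : cfc (fun x => 1 - η * (x + σ2)) G = 1 - η • (G + σ2 • 1) := by
    rw [cfc_sub _ _ G (hcont _) (hcont _), cfc_const_one ℝ G, cfc_const_mul η _ G (hcont _), hA]
  rw [cfc_mul _ _ G (hcont _) (hcont _), cfc_pow _ L G (hcont _) hG.isSelfAdjoint,
    cfc_inv _ G hshift (hcont _) hG.isSelfAdjoint, ← nonsing_inv_eq_ringInverse, hA, hstep]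

lemma abs_one_sub_mul_pow_mul_inv_le {η μ x : ℝ} (L : ℕ) (hη : 0 ≤ η) (hμ : 0 < μ)
    (hμx : μ ≤ x) (hηx : η * x ≤ 1) :
    |(1 - η * x) ^ L * x⁻¹| ≤ Real.exp (-(η * μ) * L) / μ := by
  have hx : 0 < x := hμ.trans_le hμx
  have hfactor : 0 ≤ 1 - η * x := by linarith
  have hcontract : 1 - η * x ≤ Real.exp (-(η * μ)) := calc
    1 - η * x ≤ 1 - η * μ := by nlinarith
    _ ≤ Real.exp (-(η * μ)) := by linarith [Real.add_one_le_exp (-(η * μ))]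
  rw [abs_of_nonneg (by positivity), div_eq_mul_inv, mul_comm _ (L : ℝ), Real.exp_nat_mul]
  gcongr

/-- Exponential decay of the test-point error of the Richardson recursion for KRR. -/
theorem test_point_error_bound {n : ℕ} [NeZero n]
    (G : Matrix (Fin n) (Fin n) ℝ) (hG : G.IsHermitian) (hpsd : G.PosSemidef)
    (σ2 η : ℝ) (hσ : 0 < σ2)
    (lam1 lamn : ℝ)
    (h1 : lam1 = Finset.univ.sup' Finset.univ_nonempty (fun i => hG.eigenvalues i))
    (hn : lamn = Finset.univ.inf' Finset.univ_nonempty (fun i => hG.eigenvalues i))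
    (hη0 : 0 < η) (hη1 : η < 1 / (lam1 + σ2))
    (Y kx : Fin n → ℝ) (L : ℕ) (e : ℝ)
    (he : e = -(kx ⬝ᵥ (((1 - η • (G + σ2 • (1 : Matrix (Fin n) (Fin n) ℝ))) ^ L *
      (G + σ2 • (1 : Matrix (Fin n) (Fin n) ℝ))⁻¹).mulVec Y))) :
    |e| ≤ Real.exp (-(η * (lamn + σ2)) * L) * enorm' kx * enorm' Y / (lamn + σ2) := by
  have hlamn_le : ∀ i, lamn ≤ hG.eigenvalues i := fun i =>
    hn ▸ Finset.inf'_le _ (Finset.mem_univ i)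
  have hle_lam1 : ∀ i, hG.eigenvalues i ≤ lam1 := fun i =>
    h1 ▸ Finset.le_sup' _ (Finset.mem_univ i)
  have hμ : 0 < lamn + σ2 := by
    linarith [hn ▸ Finset.le_inf' _ _ fun i _ => hpsd.eigenvalues_nonneg i]
  have hstep : ∀ i, η * (hG.eigenvalues i + σ2) ≤ 1 := fun i => by
    have := (lt_div_iff₀ (one_div_pos.mp (hη0.trans hη1))).mp hη1
    nlinarith [hle_lam1 i]
  have hshift : ∀ x ∈ spectrum ℝ G, x + σ2 ≠ 0 := by
    rw [hG.spectrum_real_eq_range_eigenvalues]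
    rintro _ ⟨i, rfl⟩
    linarith [hlamn_le i]
  rw [he, abs_neg, hG.one_sub_smul_pow_mul_inv_eq_cfc hshift η L]
  calc _ ≤ Real.exp (-(η * (lamn + σ2)) * L) / (lamn + σ2) * enorm' kx * enorm' Y :=
        hG.abs_dotProduct_cfc_mulVec_le (fun i => abs_one_sub_mul_pow_mul_inv_le L hη0.le hμ
          (by linarith [hlamn_le i]) (hstep i)) kx Y
    _ = _ := by ring
end
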